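/- Let d ≥ 1 and γ, β_1, …, β_d ≥ 0, and let (q_i)_{i≥1} be any increasing sequence of reals greater than 1 tending to infinity. Then the set E := ⋂_{i≥1} ⋃_{H ∈ ℤ, 1 ≤ H ≤ q_i^γ} N_{1/q_i}( (1/(H q_i^{β_1}))ℤ × ⋯ × (1/(H q_i^{β_d}))ℤ ) satisfies dimH E ≤ min( (d+1)γ + Σ_{j=1}^d β_j, d ). -/

import Mathlib

/-!
Fix `N`. At scale `q`, a point of `E ∩ B(0, N)` lies within `2/q` of a lattice point
`(mⱼ / (H q^{βⱼ}))ⱼ` with `1 ≤ H ≤ q^γ`, and then `|mⱼ| ≤ (N + 2) q^{γ + βⱼ}`. Counting the pairs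
`(H, m)` covers `E ∩ B(0, N)` by `O(q^γ ∏ⱼ q^{γ + βⱼ}) = O(q^{(d+1)γ + Σⱼ βⱼ})` sets of diameter
`4/q`. Since `qᵢ → ∞`, this box-counting estimate bounds the Hausdorff dimension of every
`E ∩ B(0, N)`, hence of `E`, by `(d+1)γ + Σⱼ βⱼ`; the bound `d` is that of the ambient space.
-/

open MeasureTheory Metric Set Filter
open scoped ENNReal

/-- The scaled integer lattice `cℤ = {c m : m ∈ ℤ} ⊆ ℝ`. -/
def latticeSet (c : ℝ) : Set ℝ := {x : ℝ | ∃ m : ℤ, x = c * m}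

open Topology

theorem dimH_le_of_finite_covers {X : Type*} [EMetricSpace X] {S : Set X} {s C : ℝ} (hs : 0 ≤ s)
    {r : ℕ → ℝ} (hr_pos : ∀ n, 0 < r n) (hr : Tendsto r atTop (𝓝 0))
    {ι : Type*} (A : ℕ → Finset ι) (U : ℕ → ι → Set X)
    (hdiam : ∀ n i, ediam (U n i) ≤ ENNReal.ofReal (r n))
    (hcover : ∀ n, S ⊆ ⋃ i ∈ A n, U n i)
    (hcard : ∀ n, ((A n).card : ℝ) ≤ C * r n ^ (-s)) :
    dimH S ≤ ENNReal.ofReal s := by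
  borelize X
  refine dimH_le fun t ht => ?_
  by_contra! hst
  rw [← ENNReal.ofReal_coe_nnreal, ENNReal.ofReal_lt_ofReal_iff_of_nonneg hs] at hst
  suffices μH[t] S = 0 by simp [this] at ht
  have hsum : ∀ n, ∑ i : A n, ediam (U n i) ^ (t : ℝ) ≤ ENNReal.ofReal (C * r n ^ (t - s)) := by
    intro n
    calc ∑ i : A n, ediam (U n i) ^ (t : ℝ)
        ≤ ∑ _i : A n, ENNReal.ofReal (r n ^ (t : ℝ)) := Finset.sum_le_sum fun i _ => by
          rw [← ENNReal.ofReal_rpow_of_pos (hr_pos n)]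
          exact ENNReal.rpow_le_rpow (hdiam n i) t.2
      _ = ENNReal.ofReal ((A n).card * r n ^ (t : ℝ)) := by
          rw [Finset.sum_const, Finset.card_univ, Fintype.card_coe, nsmul_eq_mul,
            ENNReal.ofReal_mul (Nat.cast_nonneg _), ENNReal.ofReal_natCast]
      _ ≤ ENNReal.ofReal (C * r n ^ (-s) * r n ^ (t : ℝ)) :=
          ENNReal.ofReal_le_ofReal <|
            mul_le_mul_of_nonneg_right (hcard n) (Real.rpow_nonneg (hr_pos n).le _)
      _ = ENNReal.ofReal (C * r n ^ (t - s)) := by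
          rw [mul_assoc, ← Real.rpow_add (hr_pos n), neg_add_eq_sub]
  have hlim : Tendsto (fun n => ENNReal.ofReal (C * r n ^ (t - s))) atTop (𝓝 0) := by
    have h := ((Real.continuousAt_rpow_const 0 (t - s) (Or.inr (by linarith))).tendsto.comp
      hr).const_mul C
    simpa [Real.zero_rpow (by linarith : t - s ≠ 0)] using ENNReal.tendsto_ofReal h
  refine le_antisymm ?_ bot_le
  calc μH[t] S ≤ liminf (fun n => ∑ i : A n, ediam (U n i) ^ (t : ℝ)) atTop :=
        Measure.hausdorffMeasure_le_liminf_sum (ι := fun n => A n) _ S _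
          (by simpa using ENNReal.tendsto_ofReal hr) (fun n (i : A n) => U n i)
          (Eventually.of_forall fun n i => hdiam n i)
          (Eventually.of_forall fun n => by simpa only [iUnion_subtype] using hcover n)
    _ ≤ liminf (fun n => ENNReal.ofReal (C * r n ^ (t - s))) atTop :=
        liminf_le_liminf (Eventually.of_forall hsum)
    _ = 0 := hlim.liminf_eq

theorem ediam_closedBall_le_ofReal {X : Type*} [PseudoMetricSpace X] (x : X) (r : ℝ) :
    ediam (closedBall x r) ≤ ENNReal.ofReal (2 * r) :=
  ediam_le_of_forall_dist_le fun a ha b hb => by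
    linarith [dist_triangle_right a b x, mem_closedBall.1 ha, mem_closedBall.1 hb]

noncomputable def ceilIcc (a : ℝ) : Finset ℤ := Finset.Icc (-⌈a⌉) ⌈a⌉

theorem mem_ceilIcc_of_abs_le {m : ℤ} {a : ℝ} (h : |(m : ℝ)| ≤ a) : m ∈ ceilIcc a := by
  obtain ⟨hlo, hhi⟩ := abs_le.1 h
  have hceil := Int.le_ceil a
  refine Finset.mem_Icc.2 ⟨Int.cast_le (R := ℝ).1 ?_, Int.cast_le (R := ℝ).1 ?_⟩ <;> push_cast <;>
    linarith

theorem card_ceilIcc_le {a : ℝ} (ha : 1 ≤ a) : ((ceilIcc a).card : ℝ) ≤ 5 * a := by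
  have hceil : (⌈a⌉ : ℝ) < a + 1 := Int.ceil_lt_add_one a
  have hpos : 0 ≤ ⌈a⌉ := Int.ceil_nonneg (by linarith)
  have hcard : ((ceilIcc a).card : ℤ) = 2 * ⌈a⌉ + 1 := by
    rw [ceilIcc, Int.card_Icc, Int.toNat_of_nonneg (by omega)]
    ring
  have hcard' : ((ceilIcc a).card : ℝ) = 2 * ⌈a⌉ + 1 := by exact_mod_cast hcard
  linarith

-- The set `E` of the theorem is `⋂ i, approxSet d γ β (q i)`.
noncomputable def approxSet (d : ℕ) (γ : ℝ) (β : Fin d → ℝ) (q : ℝ) :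
    Set (EuclideanSpace ℝ (Fin d)) :=
  ⋃ H : ℤ, ⋃ _ : 1 ≤ H ∧ (H : ℝ) ≤ q ^ γ,
    cthickening (1 / q) {x | ∀ j, x j ∈ latticeSet (1 / (H * q ^ β j))}

noncomputable def latticePoint {d : ℕ} (β : Fin d → ℝ) (q : ℝ) (H : ℤ) (m : Fin d → ℤ) :
    EuclideanSpace ℝ (Fin d) :=
  WithLp.toLp 2 fun j => 1 / (H * q ^ β j) * m j

noncomputable def coverIndex (d : ℕ) (γ : ℝ) (β : Fin d → ℝ) (q N : ℝ) :
    Finset (ℤ × (Fin d → ℤ)) :=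
  ceilIcc (q ^ γ) ×ˢ Fintype.piFinset fun j => ceilIcc ((N + 2) * q ^ (γ + β j))

theorem approxSet_inter_closedBall_subset {d : ℕ} {γ : ℝ} {β : Fin d → ℝ} {q N : ℝ}
    (hq : 1 ≤ q) :
    approxSet d γ β q ∩ closedBall 0 N ⊆
      ⋃ p ∈ coverIndex d γ β q N, closedBall (latticePoint β q p.1 p.2) (2 / q) := by
  have hq0 : 0 < q := by linarith
  rintro x ⟨hx, hxN⟩
  simp only [approxSet, mem_iUnion] at hx
  obtain ⟨H, ⟨hH1, hHq⟩, hx⟩ := hx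
  obtain ⟨y, hy, hxy⟩ := mem_thickening_iff.1 <|
    cthickening_subset_thickening' (δ₂ := 2 / q) (by positivity)
      (by rw [div_lt_div_iff_of_pos_right hq0]; norm_num) _ hx
  choose m hm using hy
  have hy_eq : y = latticePoint β q H m := PiLp.ext hm
  have hH0 : (0 : ℝ) < H := by exact_mod_cast hH1
  have hm_le : ∀ j, |(m j : ℝ)| ≤ (N + 2) * q ^ (γ + β j) := fun j => by
    have hc : 0 < (H : ℝ) * q ^ β j := by positivity
    have hyj : |y j| ≤ N + 2 := by
      have hxj : |x j| ≤ N := (PiLp.norm_apply_le x j).trans (mem_closedBall_zero_iff.1 hxN)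
      have hxyj : |x j - y j| ≤ 2 := by
        refine (PiLp.dist_apply_le x y j).trans (hxy.le.trans ?_)
        rw [div_le_iff₀ hq0]; linarith
      linarith [abs_sub_abs_le_abs_sub (y j) (x j), abs_sub_comm (x j) (y j)]
    calc |(m j : ℝ)| = |y j| * (H * q ^ β j) := by
          rw [hm j, abs_mul, abs_of_pos (one_div_pos.2 hc)]
          field_simp
      _ ≤ (N + 2) * (q ^ γ * q ^ β j) :=
          mul_le_mul hyj (by gcongr) hc.le (by linarith [abs_nonneg (y j)])
      _ = (N + 2) * q ^ (γ + β j) := by rw [Real.rpow_add hq0]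
  refine mem_iUnion₂.2 ⟨(H, m), Finset.mem_product.2 ⟨?_, ?_⟩, ?_⟩
  · exact mem_ceilIcc_of_abs_le (by rwa [abs_of_pos hH0])
  · exact Fintype.mem_piFinset.2 fun j => mem_ceilIcc_of_abs_le (hm_le j)
  · rw [mem_closedBall, ← hy_eq]
    exact hxy.le

theorem card_coverIndex_le {d : ℕ} {γ : ℝ} {β : Fin d → ℝ} {q N : ℝ} (hγ : 0 ≤ γ)
    (hβ : ∀ j, 0 ≤ β j) (hq : 1 ≤ q) (hN : 0 ≤ N) :
    ((coverIndex d γ β q N).card : ℝ) ≤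
      5 ^ (d + 1) * (N + 2) ^ d * q ^ ((d + 1) * γ + ∑ j, β j) := by
  have hq0 : 0 < q := by linarith
  have hexp : (d + 1) * γ + ∑ j, β j = γ + ∑ j, (γ + β j) := by
    simp only [Finset.sum_add_distrib, Finset.sum_const, Finset.card_univ, Fintype.card_fin,
      nsmul_eq_mul]
    ring
  have hfactor : ∀ j, ((ceilIcc ((N + 2) * q ^ (γ + β j))).card : ℝ) ≤
      5 * (N + 2) * q ^ (γ + β j) := fun j => by
    rw [mul_assoc]
    exact card_ceilIcc_le (one_le_mul_of_one_le_of_one_le (by linarith)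
      (Real.one_le_rpow hq (add_nonneg hγ (hβ j))))
  calc ((coverIndex d γ β q N).card : ℝ)
      = (ceilIcc (q ^ γ)).card * ∏ j, ((ceilIcc ((N + 2) * q ^ (γ + β j))).card : ℝ) := by
        simp [coverIndex, Finset.card_product, Fintype.card_piFinset]
    _ ≤ (5 * q ^ γ) * ∏ j, (5 * (N + 2) * q ^ (γ + β j)) := by
        refine mul_le_mul (card_ceilIcc_le (Real.one_le_rpow hq hγ))
          (Finset.prod_le_prod (fun j _ => Nat.cast_nonneg _) fun j _ => hfactor j)
          (Finset.prod_nonneg fun j _ => Nat.cast_nonneg _) (by positivity)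
    _ = 5 ^ (d + 1) * (N + 2) ^ d * q ^ ((d + 1) * γ + ∑ j, β j) := by
        rw [Finset.prod_mul_distrib, Finset.prod_const, Finset.card_univ, Fintype.card_fin,
          ← Real.rpow_sum_of_pos hq0, hexp, Real.rpow_add hq0, mul_pow]
        ring

theorem stmt1_general (d : ℕ) (γ : ℝ) (β : Fin d → ℝ)
    (hγ : 0 ≤ γ) (hβ : ∀ j, 0 ≤ β j)
    (q : ℕ → ℝ) (hq1 : ∀ i, 1 < q i)
    (hlim : Tendsto q atTop atTop) :
    dimH (⋂ i : ℕ, ⋃ H : ℤ, ⋃ _ : 1 ≤ H ∧ (H : ℝ) ≤ q i ^ γ,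
        cthickening (1 / q i)
          {x : EuclideanSpace ℝ (Fin d) |
            ∀ j : Fin d, x j ∈ latticeSet (1 / (H * q i ^ β j))})
      ≤ ENNReal.ofReal (min ((d + 1) * γ + ∑ j, β j) d) := by
  change dimH (⋂ i, approxSet d γ β (q i)) ≤ _
  set E := ⋂ i, approxSet d γ β (q i)
  set s := (d + 1 : ℝ) * γ + ∑ j, β j
  have hs : 0 ≤ s := add_nonneg (by positivity) (Finset.sum_nonneg fun j _ => hβ j)
  have hq0 : ∀ i, 0 < q i := fun i => one_pos.trans (hq1 i)
  have hscale : ∀ i, q i ^ s = 4 ^ s * (4 / q i) ^ (-s) := fun i => by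
    rw [Real.rpow_neg (div_pos four_pos (hq0 i)).le, Real.div_rpow (by norm_num) (hq0 i).le,
      inv_div, mul_div_cancel₀ _ (Real.rpow_pos_of_pos four_pos s).ne']
  have hball : ∀ N : ℕ, dimH (E ∩ closedBall 0 N) ≤ ENNReal.ofReal s := fun N =>
    dimH_le_of_finite_covers hs (C := 5 ^ (d + 1) * (N + 2) ^ d * 4 ^ s) (r := fun i => 4 / q i)
      (fun i => div_pos four_pos (hq0 i))
      (tendsto_const_nhds.div_atTop hlim) (fun i => coverIndex d γ β (q i) N)
      (fun i p => closedBall (latticePoint β (q i) p.1 p.2) (2 / q i))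
      (fun i p => (ediam_closedBall_le_ofReal _ _).trans_eq (by ring_nf))
      (fun i => (inter_subset_inter_left _ (iInter_subset _ i)).trans
        (approxSet_inter_closedBall_subset (hq1 i).le))
      (fun i => (card_coverIndex_le hγ hβ (hq1 i).le N.cast_nonneg).trans_eq
        (by rw [hscale]; ring))
  have hE : dimH E ≤ ENNReal.ofReal s := by
    rw [← iUnion_inter_closedBall_nat E 0, dimH_iUnion]
    exact iSup_le hball
  rw [ENNReal.ofReal_min, ENNReal.ofReal_natCast]
  exact le_min hE ((dimH_mono (subset_univ E)).trans_eq (by simp [Real.dimH_univ_eq_finrank]))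

theorem stmt1 (d : ℕ) (hd : 1 ≤ d) (γ : ℝ) (β : Fin d → ℝ)
    (hγ : 0 ≤ γ) (hβ : ∀ j, 0 ≤ β j)
    (q : ℕ → ℝ) (hq1 : ∀ i, 1 < q i) (hmono : StrictMono q)
    (hlim : Tendsto q atTop atTop) :
    dimH (⋂ i : ℕ, ⋃ H : ℤ, ⋃ _ : 1 ≤ H ∧ (H : ℝ) ≤ q i ^ γ,
        cthickening (1 / q i)
          {x : EuclideanSpace ℝ (Fin d) |
            ∀ j : Fin d, x j ∈ latticeSet (1 / (H * q i ^ β j))})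
      ≤ ENNReal.ofReal (min ((d + 1) * γ + ∑ j, β j) d) :=
  stmt1_general d γ β hγ hβ q hq1 hlim
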